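/- WKL ≡_W C_{2^ℕ}: weak Kőnig's lemma is continuously Weihrauch equivalent to closed choice on Cantor space. -/

import Mathlib

open Filter Topology

abbrev Baire : Type := ℕ → ℕ

/-- The pairing `⟨p,q⟩(2n) = p(n)`, `⟨p,q⟩(2n+1) = q(n)`. -/
def pairB (p q : Baire) : Baire := fun n => if n % 2 = 0 then p (n / 2) else q (n / 2)

/-- A problem: a partial multivalued function on Baire space. -/
structure Problem where
  dom : Set Baire
  sol : Baire → Set Baire

/-- Continuous Weihrauch reducibility. -/
def WRed (f g : Problem) : Prop :=
  ∃ (Kd Hd : Set Baire) (K H : Baire → Baire),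
    ContinuousOn K Kd ∧ ContinuousOn H Hd ∧
      ∀ p ∈ f.dom, p ∈ Kd ∧ K p ∈ g.dom ∧
        ∀ q ∈ g.sol (K p), pairB p q ∈ Hd ∧ H (pairB p q) ∈ f.sol p

/-- Strong continuous Weihrauch reducibility. -/
def SWRed (f g : Problem) : Prop :=
  ∃ (Kd Hd : Set Baire) (K H : Baire → Baire),
    ContinuousOn K Kd ∧ ContinuousOn H Hd ∧
      ∀ p ∈ f.dom, p ∈ Kd ∧ K p ∈ g.dom ∧
        ∀ q ∈ g.sol (K p), q ∈ Hd ∧ H q ∈ f.sol p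

def WEquiv (f g : Problem) : Prop := WRed f g ∧ WRed g f
def SWEquiv (f g : Problem) : Prop := SWRed f g ∧ SWRed g f
def WLt (f g : Problem) : Prop := WRed f g ∧ ¬ WRed g f

/-- `range(p-1)`. -/
def rangeM (p : Baire) : Set ℕ := {n | ∃ i, p i = n + 1}

/-- Characteristic function of a set of naturals. -/
noncomputable def chi (A : Set ℕ) : Baire := A.indicator fun _ => 1

noncomputable def EC : Problem where
  dom := Set.univ
  sol := fun p => {chi (rangeM p)}

noncomputable def EC1 : Problem where
  dom := {p | ((rangeM p)ᶜ).encard ≤ 1}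
  sol := fun p => {chi (rangeM p)}

def pfst (r : Baire) : Baire := fun n => r (2 * n)
def psnd (r : Baire) : Baire := fun n => r (2 * n + 1)

noncomputable def SEP : Problem where
  dom := {r | rangeM (pfst r) ∩ rangeM (psnd r) = ∅}
  sol := fun r =>
    {s | ∃ A : Set ℕ, s = chi A ∧ rangeM (pfst r) ⊆ A ∧ A ⊆ (rangeM (psnd r))ᶜ}

noncomputable def SEP1 : Problem where
  dom := {r | rangeM (pfst r) ∩ rangeM (psnd r) = ∅ ∧
    ((rangeM (pfst r) ∪ rangeM (psnd r))ᶜ).encard ≤ 1}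
  sol := SEP.sol

/- rationals -/
def ratEnum (i : ℕ) : ℚ :=
  ((i.unpair.1 : ℚ) - (i.unpair.2.unpair.1 : ℚ)) / ((i.unpair.2.unpair.2 : ℚ) + 1)

def rhoCauchy (p : Baire) (x : ℝ) : Prop :=
  ∀ n, |(ratEnum (p n) : ℝ) - x| ≤ (2 : ℝ) ^ (-(n : ℤ))

def rhoNaive (p : Baire) (x : ℝ) : Prop :=
  Tendsto (fun n => ((ratEnum (p n) : ℝ))) atTop (nhds x)

def rhoLt (p : Baire) (x : ℝ) : Prop := rangeM p = {n | (ratEnum n : ℝ) < x}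
def rhoGt (p : Baire) (x : ℝ) : Prop := rangeM p = {n | x < (ratEnum n : ℝ)}

def rhoCfLt (p : Baire) (x : ℝ) : Prop :=
  (∀ n, p n ≤ 1) ∧ ∀ n, (p n = 1 ↔ (ratEnum n : ℝ) < x)
def rhoCfGt (p : Baire) (x : ℝ) : Prop :=
  (∀ n, p n ≤ 1) ∧ ∀ n, (p n = 1 ↔ x < (ratEnum n : ℝ))

noncomputable def cfTail : List ℕ → ℝ
  | [] => 0
  | b :: l => 1 / ((b : ℝ) + cfTail l)

noncomputable def cfApprox (p : Baire) (k : ℕ) : ℝ :=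
  ((Denumerable.ofNat ℤ (p 0) : ℤ) : ℝ) + cfTail ((List.range k).map fun i => p (i + 1))

def rhoCf (p : Baire) (x : ℝ) : Prop :=
  ((∀ i, 1 ≤ i → 1 ≤ p i) ∧ Tendsto (cfApprox p) atTop (nhds x)) ∨
    (∃ k, 1 ≤ k ∧ p k = 0 ∧ (∀ i, 1 ≤ i → i < k → 1 ≤ p i) ∧
      (2 ≤ k → 2 ≤ p (k - 1)) ∧ x = cfApprox p (k - 1))

def rhoDec (p : Baire) (x : ℝ) : Prop :=
  (∀ n, 1 ≤ n → p n ≤ 9) ∧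
    x = ((Denumerable.ofNat ℤ (p 0) : ℤ) : ℝ) + ∑' n : ℕ, (p (n + 1) : ℝ) / 10 ^ (n + 1)

/-- The implication problem between two representations of ℝ. -/
def implProblem (d1 d2 : Baire → ℝ → Prop) : Problem where
  dom := {p | ∃ x, d1 p x}
  sol := fun p => {q | ∃ x, d1 p x ∧ d2 q x}

/- trees / WKL / choice on Cantor space -/
def wordCode : List Bool → ℕ
  | [] => 0
  | b :: w => 2 * wordCode w + (if b then 2 else 1)

def prefixList (x : Baire) (k : ℕ) : List Bool := (List.range k).map fun i => decide (x i = 1)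

def isTreeCode (t : Baire) : Prop :=
  (∀ n, t n ≤ 1) ∧
    ∀ w v : List Bool, w <+: v → t (wordCode v) = 1 → t (wordCode w) = 1

def WKL : Problem where
  dom := {t | isTreeCode t ∧ {w : List Bool | t (wordCode w) = 1}.Infinite}
  sol := fun t => {x | (∀ n, x n ≤ 1) ∧ ∀ k, t (wordCode (prefixList x k)) = 1}

def Ap (p : Baire) : Set Baire :=
  {x | (∀ n, x n ≤ 1) ∧ ∀ k, wordCode (prefixList x k) ∉ rangeM p}

def CCantor : Problem where
  dom := {p | (Ap p).Nonempty}
  sol := Ap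

def Cle2 : Problem where
  dom := {p | (Ap p).Nonempty ∧ (Ap p).encard ≤ 2}
  sol := Ap

/- limit and parallelization -/
def projCount (r : Baire) (n : ℕ) : Baire := fun k => r (Nat.pair n k)

def limP : Problem where
  dom := {r | ∃ q : Baire, ∀ k, Tendsto (fun n => projCount r n k) atTop (nhds (q k))}
  sol := fun r => {q | ∀ k, Tendsto (fun n => projCount r n k) atTop (nhds (q k))}

def parallel (f : Problem) : Problem where
  dom := {r | ∀ n, projCount r n ∈ f.dom}
  sol := fun r => {s | ∀ n, projCount s n ∈ f.sol (projCount r n)}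

def MCT : Problem where
  dom := {r | ∃ xs : ℕ → ℝ, (∀ n, rhoCauchy (projCount r n) (xs n)) ∧
    Monotone xs ∧ BddAbove (Set.range xs)}
  sol := fun r => {q | ∃ xs : ℕ → ℝ, (∀ n, rhoCauchy (projCount r n) (xs n)) ∧
    Monotone xs ∧ BddAbove (Set.range xs) ∧ rhoCauchy q (⨆ n, xs n)}

/- SORT and RAT -/
open Classical in
noncomputable def sortOut (p : Baire) : Baire := fun k =>
  if {i | p i = 0}.Infinite then 0
  else if k < {i | p i = 0}.ncard then 0 else 1

noncomputable def SORT : Problem where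
  dom := {p | ∀ n, p n ≤ 1}
  sol := fun p => {sortOut p}

def znk (n : ℕ) : Baire := fun k => if k < n then 0 else 1

def RAT : Problem where
  dom := {p | ∃ x, rhoCauchy p x}
  sol := fun p => {s | ∃ x, rhoCauchy p x ∧
    ((∃ n, x = (ratEnum n : ℝ) ∧ s = znk n) ∨
      ((∀ r : ℚ, x ≠ (r : ℝ)) ∧ s = fun _ => 0))}

/- omniscience principles -/
def projFin (m i : ℕ) (r : Baire) : Baire := fun k => r (m * k + i - 1)
def isZeroSeq (p : Baire) : Prop := ∀ k, p k = 0
def constSeq (i : ℕ) : Baire := fun _ => i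

noncomputable def LPOn (n : ℕ) : Problem where
  dom := Set.univ
  sol := fun r => {constSeq ({i | 1 ≤ i ∧ i ≤ n ∧ isZeroSeq (projFin n i r)}.ncard)}

def LLPOn (n : ℕ) : Problem where
  dom := {r | {i | 1 ≤ i ∧ i ≤ n ∧ ¬ isZeroSeq (projFin n i r)}.encard ≤ 1}
  sol := fun r => {s | ∃ i, 1 ≤ i ∧ i ≤ n ∧ isZeroSeq (projFin n i r) ∧ s = constSeq i}

def MLPOn (n : ℕ) : Problem where
  dom := {r | ∃ i, 1 ≤ i ∧ i ≤ n ∧ isZeroSeq (projFin n i r)}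
  sol := fun r => {s | ∃ i, 1 ≤ i ∧ i ≤ n ∧ isZeroSeq (projFin n i r) ∧ s = constSeq i}

def LPO : Problem where
  dom := Set.univ
  sol := fun p => {s | (isZeroSeq p ∧ s = constSeq 1) ∨ (¬ isZeroSeq p ∧ s = constSeq 0)}

/- choice problems on ℕ etc. -/
def Cfin (n : ℕ) : Problem where
  dom := {p | ∃ i, i < n ∧ i ∉ rangeM p}
  sol := fun p => {s | ∃ i, i < n ∧ i ∉ rangeM p ∧ s = constSeq i}

def ACCfin (n : ℕ) : Problem where
  dom := {p | (∃ i, i < n ∧ i ∉ rangeM p) ∧ ({i | i < n} ∩ rangeM p).encard ≤ 1}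
  sol := (Cfin n).sol

def CNat : Problem where
  dom := {p | ∃ i, i ∉ rangeM p}
  sol := fun p => {s | ∃ i, i ∉ rangeM p ∧ s = constSeq i}

/- differentiation -/
instance : Countable (AddMonoidAlgebra ℚ ℕ) :=
  AddMonoidAlgebra.coeff_injective.countable

instance : Countable (Polynomial ℚ) :=
  Polynomial.toFinsupp_injective.countable

noncomputable def polyEnum : ℕ → Polynomial ℚ :=
  (exists_surjective_nat (Polynomial ℚ)).choose

noncomputable def polyFun (k : ℕ) : C(Set.Icc (0:ℝ) 1, ℝ) :=
  ⟨fun x => ((polyEnum k).map (algebraMap ℚ ℝ)).eval (x : ℝ),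
   (((polyEnum k).map (algebraMap ℚ ℝ)).continuous).comp continuous_subtype_val⟩

noncomputable def deltaC (p : Baire) (f : C(Set.Icc (0:ℝ) 1, ℝ)) : Prop :=
  ∀ n, ‖f - polyFun (p n)‖ ≤ (2 : ℝ) ^ (-(n : ℤ))

def IsDerivOn (f g : C(Set.Icc (0:ℝ) 1, ℝ)) : Prop :=
  ∀ x : Set.Icc (0:ℝ) 1,
    HasDerivWithinAt (Set.IccExtend (by norm_num : (0:ℝ) ≤ 1) f) (g x) (Set.Icc 0 1) (x : ℝ)

noncomputable def diffP : Problem where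
  dom := {p | ∃ f g, deltaC p f ∧ IsDerivOn f g}
  sol := fun p => {q | ∃ f g, deltaC p f ∧ IsDerivOn f g ∧ deltaC q g}


/-! Both reductions are strong and return the solution unchanged. A binary tree `T` becomes an
enumeration of the words outside `T`, which codes exactly the set of paths through `T`; that set is
nonempty by Kőnig's lemma. Conversely, an enumeration `p` of forbidden words becomes the tree of
words `w` no prefix of which occurs among the first `|w|` values of `p`. Every element of `A_p` is
a path through it, so it is infinite; and every path `x` lies in `A_p`, since a forbidden prefix of
`x` enumerated at stage `i` is seen at all prefixes of `x` longer than `i` and than itself. -/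

theorem psnd_pairB (p q : Baire) : psnd (pairB p q) = q := by
  funext n
  have hodd : (2 * n + 1) % 2 ≠ 0 ∧ (2 * n + 1) / 2 = n := by omega
  simp [psnd, pairB, hodd]

theorem continuous_psnd : Continuous psnd :=
  continuous_pi fun n => continuous_apply (2 * n + 1)

theorem SWRed.wRed {f g : Problem} (h : SWRed f g) : WRed f g := by
  obtain ⟨Kd, Hd, K, H, hK, hH, hred⟩ := h
  refine ⟨Kd, psnd ⁻¹' Hd, K, H ∘ psnd, hK,
    hH.comp continuous_psnd.continuousOn fun _ h => h, fun p hp => ?_⟩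
  obtain ⟨hpK, hKp, hsol⟩ := hred p hp
  exact ⟨hpK, hKp, fun q hq => by simpa [psnd_pairB] using hsol q hq⟩

theorem SWEquiv.wEquiv {f g : Problem} (h : SWEquiv f g) : WEquiv f g :=
  ⟨h.1.wRed, h.2.wRed⟩

theorem SWRed.of_continuous {f g : Problem} (K : Baire → Baire) (hK : Continuous K)
    (hdom : ∀ p ∈ f.dom, K p ∈ g.dom) (hsol : ∀ p ∈ f.dom, g.sol (K p) ⊆ f.sol p) :
    SWRed f g :=
  ⟨Set.univ, Set.univ, K, id, hK.continuousOn, continuousOn_id,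
    fun p hp => ⟨trivial, hdom p hp, fun _ hq => ⟨trivial, hsol p hp hq⟩⟩⟩

theorem continuous_of_finite_dependence {α β : Type*} [TopologicalSpace α] [DiscreteTopology α]
    [TopologicalSpace β] [DiscreteTopology β] {F : (ℕ → α) → ℕ → β}
    (h : ∀ n, ∃ m, ∀ p q : ℕ → α, (∀ i < m, p i = q i) → F p n = F q n) :
    Continuous F := by
  refine continuous_pi fun n => continuous_discrete_rng.2 fun b => ?_
  refine isOpen_iff_forall_mem_open.2 fun p hp => ?_
  obtain ⟨m, hm⟩ := h n
  exact ⟨PiNat.cylinder p m, fun q hq => (hm q p hq).trans hp,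
    PiNat.isOpen_cylinder _ p m, PiNat.self_mem_cylinder p m⟩

theorem wordCode_injective : Function.Injective wordCode := by
  intro w
  induction w with
  | nil =>
    rintro (_ | ⟨b, v⟩) h
    · rfl
    · cases b <;> simp [wordCode] at h
  | cons a w ih =>
    rintro (_ | ⟨b, v⟩) h
    · cases a <;> simp [wordCode] at h
    · obtain ⟨rfl, hwv⟩ : a = b ∧ wordCode w = wordCode v := by
        cases a <;> cases b <;> simp [wordCode] at h ⊢ <;> omega
      rw [ih hwv]

theorem length_le_wordCode (w : List Bool) : w.length ≤ wordCode w := by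
  induction w with
  | nil => simp
  | cons b w ih => simp only [wordCode, List.length_cons]; split <;> omega

theorem prefixList_length (x : Baire) (k : ℕ) : (prefixList x k).length = k := by
  simp [prefixList]

theorem prefixList_succ (x : Baire) (k : ℕ) :
    prefixList x (k + 1) = prefixList x k ++ [decide (x k = 1)] := by
  simp [prefixList, List.range_succ]

theorem prefixList_take (x : Baire) {j k : ℕ} (h : j ≤ k) :
    (prefixList x k).take j = prefixList x j := by
  simp [prefixList, ← List.map_take, List.take_range, Nat.min_eq_left h]

theorem prefixList_prefix (x : Baire) {j k : ℕ} (h : j ≤ k) :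
    prefixList x j <+: prefixList x k := by
  rw [List.prefix_iff_eq_take, prefixList_length, prefixList_take x h]

theorem eq_prefixList_of_prefix {x : Baire} {v : List Bool} {k : ℕ}
    (h : v <+: prefixList x k) : v = prefixList x v.length := by
  have hl : v.length ≤ k := prefixList_length x k ▸ h.length_le
  exact (List.prefix_iff_eq_take.mp h).trans (prefixList_take x hl)

section Konig

variable (S : Set (List Bool))

def extensions (w : List Bool) : Set (List Bool) := {v ∈ S | w <+: v}

theorem extensions_subset (w : List Bool) :
    extensions S w ⊆ insert w (extensions S (w ++ [true]) ∪ extensions S (w ++ [false])) := by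
  rintro v ⟨hvS, r, rfl⟩
  rcases r with _ | ⟨_ | _, r⟩
  · simp
  · exact Or.inr (Or.inr ⟨hvS, r, by simp⟩)
  · exact Or.inr (Or.inl ⟨hvS, r, by simp⟩)

open Classical in
noncomputable def konigWord : ℕ → List Bool
  | 0 => []
  | k + 1 => konigWord k ++ [decide (extensions S (konigWord k ++ [true])).Infinite]

theorem extensions_konigWord_infinite (hS : S.Infinite) (k : ℕ) :
    (extensions S (konigWord S k)).Infinite := by
  induction k with
  | zero => simpa [extensions, konigWord] using hS
  | succ k ih =>
    have hchild : (extensions S (konigWord S k ++ [true])).Infinite ∨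
        (extensions S (konigWord S k ++ [false])).Infinite := by
      by_contra! hfin
      exact ih (((hfin.1.union hfin.2).insert _).subset (extensions_subset S _))
    classical
    by_cases h : (extensions S (konigWord S k ++ [true])).Infinite
    · simp [konigWord, h]
    · simpa [konigWord, h] using hchild.resolve_left h

open Classical in
noncomputable def konigBranch (k : ℕ) : ℕ :=
  if (extensions S (konigWord S k ++ [true])).Infinite then 1 else 0

theorem konigBranch_le_one (k : ℕ) : konigBranch S k ≤ 1 := by
  unfold konigBranch; split <;> omega

theorem prefixList_konigBranch (k : ℕ) : prefixList (konigBranch S) k = konigWord S k := by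
  induction k with
  | zero => simp [prefixList, konigWord]
  | succ k ih =>
    classical
    rw [prefixList_succ, ih]
    by_cases h : (extensions S (konigWord S k ++ [true])).Infinite <;>
      simp [konigBranch, konigWord, h]

end Konig

theorem WKL.sol_nonempty {t : Baire} (ht : t ∈ WKL.dom) : (WKL.sol t).Nonempty := by
  obtain ⟨htree, hinf⟩ := ht
  set S := {w : List Bool | t (wordCode w) = 1}
  refine ⟨konigBranch S, konigBranch_le_one S, fun k => ?_⟩
  obtain ⟨v, hv, hprefix⟩ := (extensions_konigWord_infinite S hinf k).nonempty
  rw [prefixList_konigBranch]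
  exact htree.2 _ v hprefix hv

def enumComplement (t : Baire) : Baire := fun i => if t i = 1 then 0 else i + 1

theorem mem_rangeM_enumComplement {t : Baire} {n : ℕ} :
    n ∈ rangeM (enumComplement t) ↔ t n ≠ 1 := by
  refine ⟨fun ⟨i, hi⟩ => ?_, fun h => ⟨n, by simp [enumComplement, h]⟩⟩
  unfold enumComplement at hi
  split_ifs at hi with h
  obtain rfl : i = n := by omega
  exact h

theorem Ap_enumComplement (t : Baire) : Ap (enumComplement t) = WKL.sol t := by
  ext x
  simp only [Ap, WKL, mem_rangeM_enumComplement, not_not]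

theorem continuous_enumComplement : Continuous enumComplement :=
  continuous_of_finite_dependence fun n =>
    ⟨n + 1, fun p q h => by simp [enumComplement, h n n.lt_succ_self]⟩

theorem WKL_swRed_CCantor : SWRed WKL CCantor :=
  SWRed.of_continuous enumComplement continuous_enumComplement
    (fun t ht => by simpa [CCantor, Ap_enumComplement] using WKL.sol_nonempty ht)
    (fun t _ => (Ap_enumComplement t).subset)

def Unrefuted (p : Baire) (w : List Bool) : Prop :=
  ∀ v, v <+: w → ∀ i < w.length, p i ≠ wordCode v + 1

theorem Unrefuted.of_prefix {p : Baire} {v w : List Bool} (hw : Unrefuted p w) (hvw : v <+: w) :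
    Unrefuted p v :=
  fun u huv i hi => hw u (huv.trans hvw) i (hi.trans_le hvw.length_le)

theorem unrefuted_congr {p q : Baire} {w : List Bool} (h : ∀ i < w.length, p i = q i) :
    Unrefuted p w ↔ Unrefuted q w :=
  forall₂_congr fun _ _ => forall₂_congr fun i hi => by rw [h i hi]

open Classical in
noncomputable def unrefutedTree (p : Baire) : Baire :=
  fun n => if ∃ w, wordCode w = n ∧ Unrefuted p w then 1 else 0

theorem unrefutedTree_wordCode {p : Baire} {w : List Bool} :
    unrefutedTree p (wordCode w) = 1 ↔ Unrefuted p w := by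
  simp [unrefutedTree, wordCode_injective.eq_iff]

theorem continuous_unrefutedTree : Continuous unrefutedTree := by
  refine continuous_of_finite_dependence fun n => ⟨n, fun p q h => ?_⟩
  have hiff : (∃ w, wordCode w = n ∧ Unrefuted p w) ↔ ∃ w, wordCode w = n ∧ Unrefuted q w :=
    exists_congr fun w => and_congr_right fun hw =>
      unrefuted_congr fun i hi => h i (hw ▸ hi.trans_le (length_le_wordCode w))
  unfold unrefutedTree
  classical exact if_congr hiff rfl rfl

theorem isTreeCode_unrefutedTree (p : Baire) : isTreeCode (unrefutedTree p) := by
  refine ⟨fun n => ?_, fun w v hwv hv => ?_⟩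
  · unfold unrefutedTree; split <;> omega
  · rw [unrefutedTree_wordCode] at hv ⊢
    exact hv.of_prefix hwv

theorem unrefuted_prefixList {p x : Baire} (hx : x ∈ Ap p) (k : ℕ) :
    Unrefuted p (prefixList x k) := by
  intro v hv i _ hi
  exact hx.2 v.length ⟨i, eq_prefixList_of_prefix hv ▸ hi⟩

theorem unrefutedTree_mem_WKL_dom {p : Baire} (hp : (Ap p).Nonempty) :
    unrefutedTree p ∈ WKL.dom := by
  obtain ⟨x, hx⟩ := hp
  refine ⟨isTreeCode_unrefutedTree p, Set.infinite_of_injective_forall_mem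
    (f := prefixList x) (fun a b hab => ?_) fun k => ?_⟩
  · simpa [prefixList_length] using congrArg List.length hab
  · exact unrefutedTree_wordCode.2 (unrefuted_prefixList hx k)

theorem WKL_sol_unrefutedTree_subset_Ap (p : Baire) : WKL.sol (unrefutedTree p) ⊆ Ap p := by
  rintro x ⟨hx01, hx⟩
  refine ⟨hx01, fun k ⟨i, hi⟩ => ?_⟩
  have hlong := unrefutedTree_wordCode.1 (hx (max (k + 1) (i + 1)))
  exact hlong (prefixList x k) (prefixList_prefix x (by omega)) i
    (by rw [prefixList_length]; omega) hi

theorem CCantor_swRed_WKL : SWRed CCantor WKL :=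
  SWRed.of_continuous unrefutedTree continuous_unrefutedTree
    (fun _ => unrefutedTree_mem_WKL_dom) (fun p _ => WKL_sol_unrefutedTree_subset_Ap p)

/-- `WKL ≡_W C_{2^ℕ}`. -/
theorem WKL_equiv_CCantor : WEquiv WKL CCantor :=
  SWEquiv.wEquiv ⟨WKL_swRed_CCantor, CCantor_swRed_WKL⟩
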